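/- Let (α_k, σ_k), m ≤ k < n, be jobs with 1 ≤ α_k ≤ s and σ_k ≥ 0, and for an ordered vector W let H_{[m,n)}(W) denote the result of applying the pile maps Ψ_{α_m,σ_m}, …, Ψ_{α_{n-1},σ_{n-1}} in order starting from W. Then for every ordered nonnegative vector W, H_{[m,n)}(W) ≤ H_{[m,n)}(0) + |W|_∞·U coordinatewise, where |W|_∞ is the maximum coordinate of W. -/

import Mathlib

/-- The nondecreasing rearrangement operator `R` on vectors of ℝ^s. -/
noncomputable def sortVec {s : ℕ} (v : Fin s → ℝ) : Fin s → ℝ := v ∘ Tuple.sort v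

/-- The all-ones vector `U`. -/
def Uvec (s : ℕ) : Fin s → ℝ := fun _ => 1

/-- `L(α)`: coordinate `i` is `1` if `i ≤ α` and `0` otherwise (indices 0-based,
so `α : Fin s` represents the number of requested servers `α+1 ∈ {1,…,s}`). -/
def Lvec {s : ℕ} (α : Fin s) : Fin s → ℝ := fun i => if i ≤ α then 1 else 0

/-- `S(α, W)`: coordinate `i` is `max (W^α) (W^i)`. -/
def Svec {s : ℕ} (α : Fin s) (W : Fin s → ℝ) : Fin s → ℝ := fun i => max (W α) (W i)

/-- A vector is ordered if its coordinates are nondecreasing and nonnegative. -/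
def IsOrdered {s : ℕ} (W : Fin s → ℝ) : Prop := Monotone W ∧ ∀ i, 0 ≤ W i

/-- The one-step MJSRE map `Φ_{α,σ,τ}(W) = R(S(α,W) + σ·L(α) − τ·U)⁺`. -/
noncomputable def Phi {s : ℕ} (α : Fin s) (σ τ : ℝ) (W : Fin s → ℝ) : Fin s → ℝ :=
  sortVec (fun i => max (Svec α W i + σ * Lvec α i - τ * Uvec s i) 0)

/-- The one-step pile map `Ψ_{α,σ}(W) = R(S(α,W) + σ·L(α))`. -/
noncomputable def Psi {s : ℕ} (α : Fin s) (σ : ℝ) (W : Fin s → ℝ) : Fin s → ℝ :=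
  sortVec (fun i => Svec α W i + σ * Lvec α i)

/-- `pileFrom a σf W m j` is the result `H_{[m, m+j)}(W)` of applying the pile maps
`Ψ_{α_m,σ_m}, …, Ψ_{α_{m+j-1},σ_{m+j-1}}` in order starting from the vector `W`. -/
noncomputable def pileFrom {s : ℕ} (a : ℕ → Fin s) (σf : ℕ → ℝ) (W : Fin s → ℝ) (m : ℕ) :
    ℕ → (Fin s → ℝ)
  | 0 => W
  | j + 1 => Psi (a (m + j)) (σf (m + j)) (pileFrom a σf W m j)

/-!
Both sides are values of the same composite map `H_{[m,n)}`. Each pile map `Ψ_{α,σ}` is monotone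
for the coordinatewise order and commutes with adding a constant vector `c·U`, because `W ↦ S(α,W)`
does and sorting does. Hence so does `H_{[m,n)}`, and `W ≤ 0 + |W|_∞·U` gives
`H_{[m,n)}(W) ≤ H_{[m,n)}(0 + |W|_∞·U) = H_{[m,n)}(0) + |W|_∞·U`.
-/

open Finset

namespace Tuple

variable {n : ℕ} {α β : Type*} [LinearOrder α] [LinearOrder β]

theorem comp_sort_comp_of_monotone {g : α → β} (hg : Monotone g) (f : Fin n → α) :
    (g ∘ f) ∘ sort (g ∘ f) = g ∘ (f ∘ sort f) :=
  unique_monotone (monotone_sort (g ∘ f)) (hg.comp (monotone_sort f))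

theorem card_filter_comp_sort_le (f : Fin n → α) (a : α) :
    #{i | (f ∘ sort f) i ≤ a} = #{i | f i ≤ a} :=
  card_equiv (sort f) (by simp)

theorem comp_sort_le_comp_sort {f g : Fin n → α} (h : f ≤ g) : f ∘ sort f ≤ g ∘ sort g := by
  intro j
  -- the `j`-th smallest entry of a tuple is `≤ a` iff more than `j` of its entries are `≤ a`
  rw [← lt_card_le_iff_apply_le_of_monotone (monotone_sort f), card_filter_comp_sort_le]
  have hg : j < #{i | g i ≤ (g ∘ sort g) j} := by
    rw [← card_filter_comp_sort_le]
    exact (lt_card_le_iff_apply_le_of_monotone (monotone_sort g)).2 le_rfl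
  exact hg.trans_le (card_le_card (monotone_filter_right _ fun i _ hi => (h i).trans hi))

end Tuple

section PileMap

variable {s : ℕ}

theorem sortVec_mono : Monotone (sortVec : (Fin s → ℝ) → Fin s → ℝ) :=
  fun _ _ => Tuple.comp_sort_le_comp_sort

theorem sortVec_add_const (v : Fin s → ℝ) (c : ℝ) :
    sortVec (fun j => v j + c) = fun i => sortVec v i + c :=
  Tuple.comp_sort_comp_of_monotone (add_left_mono (a := c)) v

theorem Psi_mono (α : Fin s) (σ : ℝ) : Monotone (Psi α σ) :=
  fun _ _ h => sortVec_mono fun j => add_le_add_left (max_le_max (h α) (h j)) _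

theorem Psi_add_const (α : Fin s) (σ : ℝ) (v : Fin s → ℝ) (c : ℝ) :
    Psi α σ (fun j => v j + c) = fun i => Psi α σ v i + c := by
  have hshift : (fun j => Svec α (fun j => v j + c) j + σ * Lvec α j)
      = fun j => (Svec α v j + σ * Lvec α j) + c := by
    funext j
    simp only [Svec, max_add_add_right]
    ring
  rw [Psi, hshift, sortVec_add_const, Psi]

variable (a : ℕ → Fin s) (σf : ℕ → ℝ) (m : ℕ)

theorem pileFrom_mono (k : ℕ) : Monotone fun W => pileFrom a σf W m k := by
  induction k with
  | zero => exact monotone_id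
  | succ k ih => exact (Psi_mono _ _).comp ih

theorem pileFrom_add_const (V : Fin s → ℝ) (c : ℝ) (k : ℕ) :
    pileFrom a σf (fun j => V j + c) m k = fun i => pileFrom a σf V m k i + c := by
  induction k with
  | zero => rfl
  | succ k ih => rw [pileFrom, ih, Psi_add_const]; rfl

end PileMap

theorem pileFrom_le_pileFrom_zero_general (s : ℕ)
    (a : ℕ → Fin s) (σf : ℕ → ℝ)
    (W : Fin s → ℝ) :
    ∀ (m n : ℕ), m ≤ n →
      ∀ i, pileFrom a σf W m (n - m) i
        ≤ pileFrom a σf 0 m (n - m) i + (⨆ i', W i') * Uvec s i := by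
  intro m n _ i
  have hW : W ≤ fun j => (0 : Fin s → ℝ) j + ⨆ i', W i' := fun j => by
    simpa using le_ciSup (Set.finite_range W).bddAbove j
  have hle : pileFrom a σf W m (n - m) i ≤ pileFrom a σf _ m (n - m) i :=
    pileFrom_mono a σf m (n - m) hW i
  rw [pileFrom_add_const] at hle
  simpa [Uvec] using hle

/-- The pile started from an ordered nonnegative vector `W` is dominated by the pile
started from `0` plus the constant vector `|W|_∞ · U`:
`H_{[m,n)}(W) ≤ H_{[m,n)}(0) + |W|_∞ · U` coordinatewise. -/
theorem pileFrom_le_pileFrom_zero (s : ℕ) (hs : 0 < s)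
    (a : ℕ → Fin s) (σf : ℕ → ℝ) (hσ : ∀ k, 0 ≤ σf k)
    (W : Fin s → ℝ) (hW : IsOrdered W) :
    ∀ (m n : ℕ), m ≤ n →
      ∀ i, pileFrom a σf W m (n - m) i
        ≤ pileFrom a σf 0 m (n - m) i + (⨆ i', W i') * Uvec s i :=
  pileFrom_le_pileFrom_zero_general s a σf W
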